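/- For every simple graph G with at least one edge, the largest Laplacian eigenvalue satisfies μ_n ≥ d_max + 1, where d_max is the maximum degree of G. -/

import Mathlib

open SimpleGraph Matrix


lemma rayleigh_le {m : Type*} [Fintype m] [DecidableEq m] {A : Matrix m m ℝ}
    (hA : A.IsHermitian) {c : ℝ} (hc : ∀ i, hA.eigenvalues i ≤ c) (x : m → ℝ) :
    x ⬝ᵥ A *ᵥ x ≤ c * (x ⬝ᵥ x) := by
  set U := (hA.eigenvectorUnitary : Matrix m m ℝ) with hU
  have hB : (c • (1 : Matrix m m ℝ) - A).PosSemidef := by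
    have h1 : c • (1 : Matrix m m ℝ) - A
        = U * Matrix.diagonal (fun i => c - hA.eigenvalues i) * Uᴴ := by
      have h2 : (Matrix.diagonal (fun i => c - hA.eigenvalues i) : Matrix m m ℝ)
          = c • 1 - Matrix.diagonal (RCLike.ofReal ∘ hA.eigenvalues) := by
        ext i j
        by_cases h : i = j <;> simp [Matrix.diagonal, h]
      rw [h2, Matrix.mul_sub, Matrix.sub_mul]
      have hUU : U * Uᴴ = 1 := by
        rw [← Matrix.star_eq_conjTranspose]
        exact (Matrix.mem_unitaryGroup_iff).mp hA.eigenvectorUnitary.2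
      have hspec := hA.spectral_theorem
      rw [Unitary.conjStarAlgAut_apply, Matrix.star_eq_conjTranspose] at hspec
      rw [Matrix.mul_smul, Matrix.mul_one, Matrix.smul_mul, hUU, ← hspec]
    rw [h1]
    exact (Matrix.PosSemidef.diagonal (fun i => sub_nonneg.mpr (hc i))).mul_mul_conjTranspose_same U
  have := hB.dotProduct_mulVec_nonneg x
  simp only [Matrix.sub_mulVec, Matrix.smul_mulVec, Matrix.one_mulVec,
    dotProduct_sub, dotProduct_smul, star_trivial, RCLike.re_to_real, smul_eq_mul] at this
  linarith


open Finset in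
lemma maxDeg_add_one_le {n : ℕ} (hn : 1 ≤ n) (G : SimpleGraph (Fin n)) [DecidableRel G.Adj]
    (hedge : ∃ v w, G.Adj v w) (c : ℝ)
    (hc : ∀ y : Fin n → ℝ, y ⬝ᵥ (G.lapMatrix ℝ) *ᵥ y ≤ c * (y ⬝ᵥ y)) :
    (G.maxDegree : ℝ) + 1 ≤ c := by
  have : Nonempty (Fin n) := ⟨⟨0, by omega⟩⟩
  obtain ⟨v, hv⟩ := G.exists_maximal_degree_vertex
  set D := G.degree v with hD
  have hD1 : 1 ≤ D := by
    obtain ⟨a, b, hab⟩ := hedge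
    have h1 : 0 < G.degree a := G.degree_pos_iff_exists_adj a |>.mpr ⟨b, hab⟩
    have h2 := G.degree_le_maxDegree a
    omega
  set d : ℝ := (D : ℝ) with hd
  have hd1 : (1 : ℝ) ≤ d := by rw [hd]; exact_mod_cast hD1
  set x : Fin n → ℝ := fun u => if u = v then d else if G.Adj v u then -1 else 0 with hx
  -- x ⬝ᵥ x = d^2 + d
  have hxx : x ⬝ᵥ x = d ^ 2 + d := by
    have hpt : ∀ u, x u * x u =
        (if u = v then d ^ 2 else 0) + (if u ∈ G.neighborFinset v then 1 else 0) := by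
      intro u
      by_cases h1 : u = v
      · subst h1; simp [hx, G.notMem_neighborFinset_self]; ring
      · by_cases h2 : G.Adj v u
        · simp [hx, h1, h2, SimpleGraph.mem_neighborFinset]
        · simp [hx, h1, h2, SimpleGraph.mem_neighborFinset]
    simp only [dotProduct, hpt, Finset.sum_add_distrib, Finset.sum_ite_eq',
      Finset.mem_univ, if_true, Finset.sum_boole]
    rw [Finset.filter_mem_eq_inter, Finset.univ_inter, G.card_neighborFinset_eq_degree]
  -- quadratic form lower bound
  have hquad : d * (d + 1) ^ 2 ≤ x ⬝ᵥ (G.lapMatrix ℝ) *ᵥ x := by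
    rw [← Matrix.toLinearMap₂'_apply', SimpleGraph.lapMatrix_toLinearMap₂']
    set F : Fin n → Fin n → ℝ := fun i j => if G.Adj i j then (x i - x j) ^ 2 else 0 with hF
    have hFnn : ∀ i j, 0 ≤ F i j := by
      intro i j; by_cases h : G.Adj i j <;> simp [hF, h]; positivity
    have hrow : ∑ j, F v j = d * (d + 1) ^ 2 := by
      have : ∀ j, F v j = if j ∈ G.neighborFinset v then (d + 1) ^ 2 else 0 := by
        intro j
        by_cases h : G.Adj v j
        · have hj : j ≠ v := fun e => G.irrefl (e ▸ h)
          simp [hF, h, hx, hj, SimpleGraph.mem_neighborFinset]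
        · simp [hF, h, SimpleGraph.mem_neighborFinset]
      rw [Finset.sum_congr rfl fun j _ => this j, Finset.sum_ite_mem, Finset.univ_inter,
        Finset.sum_const, G.card_neighborFinset_eq_degree]
      rw [hd]
      ring
    have hcol : ∑ i, F i v = d * (d + 1) ^ 2 := by
      have hsymm : ∀ i, F i v = F v i := by
        intro i
        by_cases h : G.Adj v i
        · simp [hF, h, h.symm]; ring
        · have h' : ¬G.Adj i v := fun h' => h h'.symm
          simp [hF, h, h']
      rw [Finset.sum_congr rfl fun i _ => hsymm i, hrow]
    have hsplit : ∑ i, ∑ j, F i j = (∑ j, F v j) + ∑ i ∈ Finset.univ.erase v, ∑ j, F i j :=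
      (Finset.add_sum_erase _ (fun i => ∑ j, F i j) (Finset.mem_univ v)).symm
    have hrest : ∑ i ∈ Finset.univ.erase v, F i v ≤ ∑ i ∈ Finset.univ.erase v, ∑ j, F i j :=
      Finset.sum_le_sum fun i _ =>
        Finset.single_le_sum (fun j _ => hFnn i j) (Finset.mem_univ v)
    have herase : ∑ i ∈ Finset.univ.erase v, F i v = ∑ i, F i v := by
      have h0 : F v v = 0 := by simp [hF, G.irrefl]
      have h1 := Finset.add_sum_erase Finset.univ (fun i => F i v) (Finset.mem_univ v)
      simp only [h0, zero_add] at h1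
      exact h1
    have h2 : 2 * (d * (d + 1) ^ 2) ≤ ∑ i, ∑ j, F i j := by
      rw [hsplit, hrow]
      have h3 : ∑ i ∈ Finset.univ.erase v, F i v = d * (d + 1) ^ 2 := herase.trans hcol
      linarith
    linarith
  have hbound := hc x
  rw [hxx] at hbound
  have hvmax : (G.maxDegree : ℝ) = d := by rw [hv, hd]
  rw [hvmax]
  nlinarith [hquad, hbound, hd1]


/-- The (unordered) eigenvalues of the Laplacian matrix `L = D - A` of `G`. -/
noncomputable def lapEigs {V : Type*} [Fintype V] [DecidableEq V]
    (G : SimpleGraph V) [DecidableRel G.Adj] : V → ℝ :=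
  (SimpleGraph.posSemidef_lapMatrix ℝ G).1.eigenvalues

/-- `μ : Fin n → ℝ` is the nondecreasing list of the Laplacian eigenvalues of `G`
(so `μ 0 = μ_1 ≤ μ 1 = μ_2 ≤ … ≤ μ (n-1) = μ_n`). -/
def IsLapSpectrum {V : Type*} [Fintype V] [DecidableEq V]
    (G : SimpleGraph V) [DecidableRel G.Adj] {n : ℕ} (μ : Fin n → ℝ) : Prop :=
  Monotone μ ∧ ∃ σ : Fin n ≃ V, ∀ i, μ i = lapEigs G (σ i)

/-- The number of connected components of `G - S`. -/
noncomputable def numComp {V : Type*} (G : SimpleGraph V) (S : Finset V) : ℕ :=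
  Nat.card (G.induce ((↑S : Set V)ᶜ)).ConnectedComponent

theorem stmt16 {n : ℕ} (hn : 1 ≤ n) (G : SimpleGraph (Fin n)) [DecidableRel G.Adj]
    (hedge : ∃ v w, G.Adj v w) (μ : Fin n → ℝ) (hμ : IsLapSpectrum G μ) :
    (G.maxDegree : ℝ) + 1 ≤ μ ⟨n - 1, by omega⟩ := by
  obtain ⟨hmono, σ, hσ⟩ := hμ
  apply maxDeg_add_one_le hn G hedge
  intro y
  apply rayleigh_le (SimpleGraph.posSemidef_lapMatrix ℝ G).1
  intro i
  have h1 : (SimpleGraph.posSemidef_lapMatrix ℝ G).1.eigenvalues i = μ (σ.symm i) := by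
    rw [hσ (σ.symm i)]
    simp [lapEigs]
  rw [h1]
  exact hmono (by simp [Fin.le_def]; omega)
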